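/- Let G be a finite simple graph, k ≥ 1, T ⊆ V(G), and let H be a graph together with a labeling ℓ assigning to each node of H a k-coloring of the induced subgraph G[T]. Then (H,ℓ) is equal to the contracted solution graph C^c_k(G,T) (i.e., there is a label-preserving isomorphism between them) if and only if one can assign to every node x of H a nonempty set S_x of k-colorings of G such that: (a) the sets S_x, for x ∈ V(H), partition the set of all k-colorings of G; (b) for every x ∈ V(H) and every γ ∈ S_x, the restriction of γ to T equals ℓ(x); (c) for every edge xy of H, ℓ(x) ≠ ℓ(y); (d) for every x ∈ V(H), S_x induces a connected subgraph of C_k(G); and (e) for every pair of distinct nodes x, y of H, xy is an edge of H if and only if there exist α ∈ S_x and β ∈ S_y that are adjacent in C_k(G). -/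

import Mathlib

open SimpleGraph

/-- A proper `k`-coloring of a graph. -/
def IsColoring {W : Type*} (G : SimpleGraph W) (k : ℕ) (α : W → Fin k) : Prop :=
  ∀ u v : W, G.Adj u v → α u ≠ α v

/-- The `k`-color graph `C_k(G)`: nodes are proper `k`-colorings of `G`,
two colorings being adjacent iff they differ on exactly one vertex. -/
def colorGraph {W : Type*} (G : SimpleGraph W) (k : ℕ) :
    SimpleGraph {α : W → Fin k // IsColoring G k α} where
  Adj α β := ∃! w, α.1 w ≠ β.1 w
  symm := ⟨by
    rintro α β ⟨w, hw, hu⟩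
    exact ⟨w, hw.symm, fun u hu' => hu u hu'.symm⟩⟩
  loopless := ⟨by
    rintro α ⟨w, hw, -⟩
    exact hw rfl⟩

/-- The subgraph of a labeled graph consisting of the edges between
equally labeled nodes. -/
def sameLabelSub {N L : Type*} (H : SimpleGraph N) (f : N → L) : SimpleGraph N where
  Adj x y := H.Adj x y ∧ f x = f y
  symm := ⟨fun _ _ h => ⟨h.1.symm, h.2.symm⟩⟩
  loopless := ⟨fun x h => H.loopless.irrefl x h.1⟩

/-- The quotient graph obtained from a labeled graph by contracting every
(maximal) connected set of equally labeled nodes (i.e. every label component)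
into a single node. -/
def quotGraph {N L : Type*} (H : SimpleGraph N) (f : N → L) :
    SimpleGraph (sameLabelSub H f).ConnectedComponent where
  Adj c d := c ≠ d ∧ ∃ a b, (sameLabelSub H f).connectedComponentMk a = c ∧
      (sameLabelSub H f).connectedComponentMk b = d ∧ H.Adj a b
  symm := ⟨by
    rintro c d ⟨hne, a, b, ha, hb, hab⟩
    exact ⟨hne.symm, b, a, hb, ha, hab.symm⟩⟩
  loopless := ⟨fun c h => h.1 rfl⟩

/-- The common label of a label component. -/
def quotLabel {N L : Type*} (H : SimpleGraph N) (f : N → L) :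
    (sameLabelSub H f).ConnectedComponent → L :=
  SimpleGraph.ConnectedComponent.lift f (by
    intro v w p hp
    clear hp
    induction p with
    | nil => rfl
    | cons h _ ih =>
      obtain ⟨-, h2⟩ := h
      exact h2.trans ih)

/-- The label of a coloring: its restriction to the terminal set `T`. -/
def csgLabelFun {W : Type*} (G : SimpleGraph W) (k : ℕ) (T : Set W) :
    {α : W → Fin k // IsColoring G k α} → (T → Fin k) :=
  fun α t => α.1 t.1

/-- The node set of the contracted solution graph: the label components. -/
abbrev CSGNode {W : Type*} (G : SimpleGraph W) (k : ℕ) (T : Set W) :=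
  (sameLabelSub (colorGraph G k) (csgLabelFun G k T)).ConnectedComponent

/-- The contracted solution graph `C^c_k(G,T)`. -/
def CSG {W : Type*} (G : SimpleGraph W) (k : ℕ) (T : Set W) : SimpleGraph (CSGNode G k T) :=
  quotGraph (colorGraph G k) (csgLabelFun G k T)

/-- The `γ`-node of the contracted solution graph: the label component containing `γ`. -/
def csgNode {W : Type*} (G : SimpleGraph W) (k : ℕ) (T : Set W)
    (γ : {α : W → Fin k // IsColoring G k α}) : CSGNode G k T :=
  (sameLabelSub (colorGraph G k) (csgLabelFun G k T)).connectedComponentMk γ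

/-- The label of a node of the contracted solution graph: the common restriction
to `T` of its colorings. -/
def csgLabel {W : Type*} (G : SimpleGraph W) (k : ℕ) (T : Set W) :
    CSGNode G k T → (T → Fin k) :=
  quotLabel (colorGraph G k) (csgLabelFun G k T)

/-- The restriction of a proper coloring to an induced subgraph. -/
def restrictColoring {W : Type*} (G : SimpleGraph W) (k : ℕ) (S : Set W)
    (γ : {α : W → Fin k // IsColoring G k α}) :
    {α : S → Fin k // IsColoring (G.induce S) k α} :=
  ⟨fun u => γ.1 u.1, fun u w h => γ.2 u.1 w.1 h⟩

/-- A graph is chordal if it contains no induced cycle of length greater than 3. -/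
def Chordal {W : Type*} (G : SimpleGraph W) : Prop :=
  ∀ n : ℕ, 4 ≤ n → IsEmpty (SimpleGraph.cycleGraph n ↪g G)

/-- `S` is a vertex cut: `G - S` is disconnected. -/
def IsVertexCut {W : Type*} (G : SimpleGraph W) (S : Set W) : Prop :=
  ¬ (G.induce Sᶜ).Preconnected

/-- `G` is `l`-connected. -/
def LConnected {W : Type*} (G : SimpleGraph W) (l : ℕ) : Prop :=
  G.Connected ∧ l + 1 ≤ Nat.card W ∧ ∀ S : Set W, IsVertexCut G S → l ≤ S.ncard

/-- A labeled graph `(H,ℓ)`, whose labels are `k`-colorings of the complete graph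
on a vertex (type) `S`, is an `(|S|,k)`-color-complete graph. -/
def IsColorComplete {N S : Type*} (k : ℕ) (H : SimpleGraph N) (ℓ : N → S → Fin k) : Prop :=
  (∀ x, Function.Injective (ℓ x)) ∧
  (∀ f : S → Fin k, Function.Injective f → ∃! x, ℓ x = f) ∧
  (∀ x y, H.Adj x y ↔ ∃! s, ℓ x s ≠ ℓ y s)

/-- The injective neighborhood property. -/
def INP {N L : Type*} (H : SimpleGraph N) (ℓ : N → L) : Prop :=
  ∀ u v w : N, H.Adj u v → H.Adj u w → v ≠ w → ℓ v ≠ ℓ w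

/-- The weight `w(P)` of a walk `P` in a labeled graph: the sum over the vertices `x`
of `P` of the number of colors used by labels of neighbors of `x` in `P` but not by
the label of `x`. -/
noncomputable def walkWeight {N S : Type*} {k : ℕ} {G : SimpleGraph N} (ℓ : N → S → Fin k)
    {a b : N} (P : G.Walk a b) : ℕ :=
  letI := Classical.decEq N
  ∑ x ∈ P.support.toFinset,
    ((⋃ y ∈ P.toSubgraph.neighborSet x, Set.range (ℓ y)) \ Set.range (ℓ x)).ncard

/-!
The contraction only uses that `C_k(G)` is a graph labeled by restriction to `T`, so we work with an
arbitrary labeled graph `(K, f)`. The sets `S x` of a certificate are exactly the label components: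
each is connected with constant label, so it lies in one component, and an edge between equal
labels cannot leave it, since it would give an edge of `H` between equally labeled nodes. Hence
`x ↦ S x` is a bijection onto the label components, and condition (e) makes it an isomorphism.
-/

namespace SimpleGraph

variable {M N L : Type*} {K : SimpleGraph M} {f : M → L} {H : SimpleGraph N} {ℓ : N → L}

/-- The node `x` of `H` stands for the label component `S x` of `K`. -/
structure IsContractionCertificate (K : SimpleGraph M) (f : M → L) (H : SimpleGraph N)
    (ℓ : N → L) (S : N → Set M) : Prop where
  nonempty : ∀ x, (S x).Nonempty
  existsUnique_mem : ∀ γ, ∃! x, γ ∈ S x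
  label_eq : ∀ x, ∀ γ ∈ S x, f γ = ℓ x
  label_ne_of_adj : ∀ x y, H.Adj x y → ℓ x ≠ ℓ y
  connected : ∀ x, (K.induce (S x)).Connected
  adj_iff : ∀ x y, x ≠ y → (H.Adj x y ↔ ∃ α ∈ S x, ∃ β ∈ S y, K.Adj α β)

@[simp]
lemma quotLabel_connectedComponentMk (γ : M) :
    quotLabel K f ((sameLabelSub K f).connectedComponentMk γ) = f γ :=
  rfl

lemma quotGraph_adj_iff {c d : (sameLabelSub K f).ConnectedComponent} :
    (quotGraph K f).Adj c d ↔ c ≠ d ∧ ∃ α ∈ c.supp, ∃ β ∈ d.supp, K.Adj α β := by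
  simp only [quotGraph, ConnectedComponent.mem_supp_iff]
  grind

lemma quotLabel_ne_of_adj {c d : (sameLabelSub K f).ConnectedComponent}
    (h : (quotGraph K f).Adj c d) : quotLabel K f c ≠ quotLabel K f d := by
  obtain ⟨hcd, α, β, rfl, rfl, hαβ⟩ := h
  intro hlabel
  exact hcd (ConnectedComponent.sound (Adj.reachable ⟨hαβ, hlabel⟩))

lemma connected_induce_supp (c : (sameLabelSub K f).ConnectedComponent) :
    (K.induce c.supp).Connected :=
  (ConnectedComponent.maximal_connected_induce_supp c).1.mono
    (fun _ _ h => h.1 : (sameLabelSub K f).induce c.supp ≤ K.induce c.supp)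

lemma isContractionCertificate_supp (φ : H ≃g quotGraph K f)
    (hφ : ∀ x, quotLabel K f (φ x) = ℓ x) :
    IsContractionCertificate K f H ℓ fun x => (φ x).supp where
  nonempty x := (φ x).nonempty_supp
  existsUnique_mem γ := by
    refine ⟨φ.symm (connectedComponentMk _ γ), ?_, fun x hx => ?_⟩
    · exact (φ.apply_symm_apply _).symm
    · rw [(ConnectedComponent.mem_supp_iff _ _).mp hx, RelIso.symm_apply_apply]
  label_eq x γ hγ := by
    rw [← hφ x, ← (ConnectedComponent.mem_supp_iff _ _).mp hγ, quotLabel_connectedComponentMk]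
  label_ne_of_adj x y hxy := by
    rw [← hφ x, ← hφ y]
    exact quotLabel_ne_of_adj (φ.map_rel_iff.mpr hxy)
  connected x := connected_induce_supp (φ x)
  adj_iff x y hxy := by
    rw [← φ.map_rel_iff, quotGraph_adj_iff]
    exact and_iff_right (φ.injective.ne hxy)

namespace IsContractionCertificate

variable {S : N → Set M} (hS : IsContractionCertificate K f H ℓ S)
include hS

lemma eq_of_mem {γ : M} {x y : N} (hx : γ ∈ S x) (hy : γ ∈ S y) : x = y :=
  (hS.existsUnique_mem γ).unique hx hy

lemma sameLabelSub_reachable {α β : M} {x : N} (hα : α ∈ S x) (hβ : β ∈ S x) :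
    (sameLabelSub K f).Reachable α β := by
  let ι : K.induce (S x) →g sameLabelSub K f :=
    ⟨Subtype.val, fun {γ δ} h => ⟨h, (hS.label_eq x _ γ.2).trans (hS.label_eq x _ δ.2).symm⟩⟩
  exact ((hS.connected x).preconnected ⟨α, hα⟩ ⟨β, hβ⟩).map ι

lemma mem_of_sameLabelSub_adj {α β : M} {x : N} (h : (sameLabelSub K f).Adj α β)
    (hα : α ∈ S x) : β ∈ S x := by
  obtain ⟨y, hβ, -⟩ := hS.existsUnique_mem β
  obtain rfl | hxy := eq_or_ne x y
  · exact hβ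
  -- `α` and `β` would give an edge `xy` of `H` between equally labeled nodes
  refine absurd ?_ (hS.label_ne_of_adj x y ((hS.adj_iff x y hxy).mpr ⟨α, hα, β, hβ, h.1⟩))
  rw [← hS.label_eq x α hα, ← hS.label_eq y β hβ, h.2]

lemma mem_of_sameLabelSub_reachable {α β : M} {x : N} (h : (sameLabelSub K f).Reachable α β)
    (hα : α ∈ S x) : β ∈ S x := by
  obtain ⟨p⟩ := h
  induction p with
  | nil => exact hα
  | cons hadj _ ih => exact ih (hS.mem_of_sameLabelSub_adj hadj hα)

lemma supp_connectedComponentMk {α : M} {x : N} (hα : α ∈ S x) :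
    ((sameLabelSub K f).connectedComponentMk α).supp = S x := by
  ext β
  rw [ConnectedComponent.mem_supp_iff, ConnectedComponent.eq]
  exact ⟨fun h => hS.mem_of_sameLabelSub_reachable h.symm hα,
    fun hβ => hS.sameLabelSub_reachable hβ hα⟩

noncomputable def component (x : N) : (sameLabelSub K f).ConnectedComponent :=
  (sameLabelSub K f).connectedComponentMk (hS.nonempty x).some

lemma supp_component (x : N) : (hS.component x).supp = S x :=
  hS.supp_connectedComponentMk (hS.nonempty x).some_mem

lemma component_bijective : Function.Bijective hS.component := by
  refine ⟨fun x y hxy => ?_, fun c => ?_⟩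
  · have hSxy : S x = S y := by rw [← hS.supp_component, hxy, hS.supp_component]
    exact hS.eq_of_mem (hS.nonempty x).some_mem (hSxy ▸ (hS.nonempty x).some_mem)
  · obtain ⟨γ, rfl⟩ := c.exists_rep
    obtain ⟨x, hx, -⟩ := hS.existsUnique_mem γ
    exact ⟨x, ConnectedComponent.supp_inj.mp
      ((hS.supp_component x).trans (hS.supp_connectedComponentMk hx).symm)⟩

lemma quotLabel_component (x : N) : quotLabel K f (hS.component x) = ℓ x :=
  hS.label_eq x _ (hS.nonempty x).some_mem

noncomputable def iso : H ≃g quotGraph K f where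
  toEquiv := Equiv.ofBijective _ hS.component_bijective
  map_rel_iff' {x y} := by
    simp only [Equiv.ofBijective_apply, quotGraph_adj_iff, supp_component,
      hS.component_bijective.injective.ne_iff]
    by_cases hxy : x = y
    · simp [hxy]
    · rw [hS.adj_iff x y hxy]
      exact and_iff_right hxy

end IsContractionCertificate

theorem exists_labeled_iso_quotGraph_iff :
    (∃ φ : H ≃g quotGraph K f, ∀ x, quotLabel K f (φ x) = ℓ x) ↔
      ∃ S, IsContractionCertificate K f H ℓ S :=
  ⟨fun ⟨φ, hφ⟩ => ⟨_, isContractionCertificate_supp φ hφ⟩,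
    fun ⟨_, hS⟩ => ⟨hS.iso, hS.quotLabel_component⟩⟩

end SimpleGraph

theorem statement_0_general {V : Type}
    (G : SimpleGraph V) (k : ℕ) (T : Set V)
    {N : Type} (H : SimpleGraph N) (ℓ : N → (T → Fin k)) :
    (∃ φ : H ≃g CSG G k T, ∀ x, csgLabel G k T (φ x) = ℓ x) ↔
    (∃ S : N → Set {α : V → Fin k // IsColoring G k α},
      (∀ x, (S x).Nonempty) ∧
      (∀ γ : {α : V → Fin k // IsColoring G k α}, ∃! x, γ ∈ S x) ∧
      (∀ x, ∀ γ ∈ S x, csgLabelFun G k T γ = ℓ x) ∧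
      (∀ x y, H.Adj x y → ℓ x ≠ ℓ y) ∧
      (∀ x, ((colorGraph G k).induce (S x)).Connected) ∧
      (∀ x y : N, x ≠ y →
        (H.Adj x y ↔ ∃ α ∈ S x, ∃ β ∈ S y, (colorGraph G k).Adj α β))) := by
  rw [CSG, csgLabel, exists_labeled_iso_quotGraph_iff]
  exact exists_congr fun S =>
    ⟨fun ⟨h₁, h₂, h₃, h₄, h₅, h₆⟩ => ⟨h₁, h₂, h₃, h₄, h₅, h₆⟩,
      fun ⟨h₁, h₂, h₃, h₄, h₅, h₆⟩ => ⟨h₁, h₂, h₃, h₄, h₅, h₆⟩⟩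

/-- characterization of contracted solution graphs by certificates. -/
theorem statement_0 {V : Type} [Fintype V] [DecidableEq V]
    (G : SimpleGraph V) (k : ℕ) (hk : 1 ≤ k) (T : Set V)
    {N : Type} (H : SimpleGraph N) (ℓ : N → (T → Fin k))
    (hℓ : ∀ x, IsColoring (G.induce T) k (ℓ x)) :
    (∃ φ : H ≃g CSG G k T, ∀ x, csgLabel G k T (φ x) = ℓ x) ↔
    (∃ S : N → Set {α : V → Fin k // IsColoring G k α},
      (∀ x, (S x).Nonempty) ∧
      (∀ γ : {α : V → Fin k // IsColoring G k α}, ∃! x, γ ∈ S x) ∧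
      (∀ x, ∀ γ ∈ S x, csgLabelFun G k T γ = ℓ x) ∧
      (∀ x y, H.Adj x y → ℓ x ≠ ℓ y) ∧
      (∀ x, ((colorGraph G k).induce (S x)).Connected) ∧
      (∀ x y : N, x ≠ y →
        (H.Adj x y ↔ ∃ α ∈ S x, ∃ β ∈ S y, (colorGraph G k).Adj α β))) :=
  statement_0_general G k T H ℓ
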